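/- arXiv:1607.01167 — 3 statements merged into one kernel-verified Lean document; each statement's English description precedes it below -/
import Mathlib

section
/- Let p be a complex polynomial of degree d with p(z) ≠ 0 on the open disk of radius M > 0 centered at 0, let f(z) = log p(z) be a branch of the logarithm on this disk, and let t ∈ ℂ with |t| < M. Set q = |t|/M. Then the m-th Taylor truncation T_m(f)(t) = f(0) + ∑_{j=1}^m f^{(j)}(0) t^j / j! satisfies |f(t) - T_m(f)(t)| ≤ d·q^{m+1} / ((m+1)(1-q)). -/
/-! Since `exp ∘ f = p`, the derivative of `f` is `p' / p = ∑ 1 / (z - r)`, the sum running over the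
roots `r` of `p` with multiplicity, all of which lie outside the disk. Differentiating `k` more
times gives `|f^(k+1)(0)| ≤ d k! / M^(k+1)`, so the `n`-th Taylor term of `f` at `t` is at most
`d q^n / n`, and the tail beyond degree `m` is dominated by the geometric series
`d q^(m+1) / (m+1) · ∑ q^i`. -/

open Polynomial Finset

open Metric Nat Topology

section IteratedDeriv

variable {𝕜 : Type*} [NontriviallyNormedField 𝕜]

theorem iteratedDeriv_multiset_sum {F ι : Type*} [NormedAddCommGroup F] [NormedSpace 𝕜 F]
    {g : ι → 𝕜 → F} {s : Multiset ι} {x : 𝕜} {n : ℕ} (hg : ∀ i ∈ s, ContDiffAt 𝕜 n (g i) x) :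
    iteratedDeriv n (fun y => (s.map fun i => g i y).sum) x =
      (s.map fun i => iteratedDeriv n (g i) x).sum := by
  classical
  have hlhs : (fun y => (s.map fun i => g i y).sum) = fun y => ∑ i : s, g i y := by
    funext y; rw [← Multiset.map_univ]; rfl
  have hrhs : (s.map fun i => iteratedDeriv n (g i) x).sum = ∑ i : s, iteratedDeriv n (g i) x := by
    rw [← Multiset.map_univ]; rfl
  rw [hlhs, hrhs]
  exact iteratedDeriv_fun_sum fun i _ => hg i Multiset.coe_mem

theorem iteratedDeriv_inv_sub (k : ℕ) (r z : 𝕜) :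
    iteratedDeriv k (fun w => (w - r)⁻¹) z = (-1) ^ k * k ! * (z - r) ^ (-1 - k : ℤ) := by
  simpa [iteratedDeriv_eq_iterate] using congrFun (iter_deriv_inv_linear_sub k 1 r) z

end IteratedDeriv

-- At `z = r` both sides are `0`, by the conventions `0 ^ (-1 - k) = 0` and `x / 0 = 0`.
theorem norm_iteratedDeriv_inv_sub {𝕜 : Type*} [RCLike 𝕜] (k : ℕ) (r z : 𝕜) :
    ‖iteratedDeriv k (fun w => (w - r)⁻¹) z‖ = k ! / ‖z - r‖ ^ (k + 1) := by
  rw [iteratedDeriv_inv_sub, norm_mul, norm_mul, norm_pow, norm_neg, norm_one, one_pow, one_mul,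
    norm_natCast, norm_zpow, show (-1 - k : ℤ) = -(k + 1 : ℕ) by push_cast; ring, zpow_neg,
    zpow_natCast, div_eq_mul_inv]

theorem deriv_eq_sum_inv_sub_roots_of_exp_eq_eval {p : ℂ[X]} {f : ℂ → ℂ} {z : ℂ}
    (hf : DifferentiableAt ℂ f z) (hlog : (fun w => Complex.exp (f w)) =ᶠ[𝓝 z] fun w => p.eval w) :
    deriv f z = (p.roots.map fun r => (z - r)⁻¹).sum := by
  have hfz : Complex.exp (f z) = p.eval z := hlog.eq_of_nhds
  have hpz : p.eval z ≠ 0 := hfz ▸ Complex.exp_ne_zero _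
  have hderiv : Complex.exp (f z) * deriv f z = p.derivative.eval z :=
    (hf.hasDerivAt.cexp.congr_of_eventuallyEq hlog.symm).unique (p.hasDerivAt z)
  simp only [← one_div, ← (IsAlgClosed.splits p).eval_derivative_div_eval_of_ne_zero hpz, ← hderiv,
    ← hfz]
  field_simp

theorem norm_iteratedDeriv_succ_le_of_exp_eq_eval {p : ℂ[X]} {f : ℂ → ℂ} {c : ℂ} {M : ℝ}
    (hM : 0 < M) (hf : DifferentiableOn ℂ f (ball c M))
    (hlog : ∀ z ∈ ball c M, Complex.exp (f z) = p.eval z) (k : ℕ) :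
    ‖iteratedDeriv (k + 1) f c‖ ≤ p.natDegree * k ! / M ^ (k + 1) := by
  have hroots : ∀ r ∈ p.roots, M ≤ ‖c - r‖ := by
    intro r hr
    by_contra! hrc
    have := hlog r (by rwa [mem_ball, dist_eq_norm, norm_sub_rev])
    exact Complex.exp_ne_zero _ (this.trans (isRoot_of_mem_roots hr))
  have hderiv : deriv f =ᶠ[𝓝 c] fun z => (p.roots.map fun r => (z - r)⁻¹).sum := by
    filter_upwards [isOpen_ball.mem_nhds (mem_ball_self hM)] with z hz
    exact deriv_eq_sum_inv_sub_roots_of_exp_eq_eval (hf.differentiableAt (isOpen_ball.mem_nhds hz))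
      (Filter.eventually_of_mem (isOpen_ball.mem_nhds hz) hlog)
  rw [iteratedDeriv_succ', hderiv.iteratedDeriv_eq,
    iteratedDeriv_multiset_sum (g := fun r w => (w - r)⁻¹) fun r hr =>
      (contDiffAt_id.sub contDiffAt_const).inv (norm_pos_iff.1 (hM.trans_le (hroots r hr)))]
  calc ‖(p.roots.map fun r => iteratedDeriv k (fun w => (w - r)⁻¹) c).sum‖
      ≤ (p.roots.map fun r => ‖iteratedDeriv k (fun w => (w - r)⁻¹) c‖).sum := by
        simpa [Multiset.map_map, Function.comp_def] using norm_multiset_sum_le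
          (p.roots.map fun r => iteratedDeriv k (fun w => (w - r)⁻¹) c)
    _ ≤ (p.roots.map fun _ => k ! / M ^ (k + 1)).sum := by
        refine Multiset.sum_map_le_sum_map _ _ fun r hr => ?_
        rw [norm_iteratedDeriv_inv_sub]
        gcongr
        exact hroots r hr
    _ ≤ p.natDegree * k ! / M ^ (k + 1) := by
        rw [Multiset.map_const', Multiset.sum_replicate, nsmul_eq_mul, mul_div_assoc]
        gcongr
        exact_mod_cast card_roots' p

theorem norm_taylorTerm_le_of_exp_eq_eval {p : ℂ[X]} {f : ℂ → ℂ} {c : ℂ} {M : ℝ}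
    (hM : 0 < M) (hf : DifferentiableOn ℂ f (ball c M))
    (hlog : ∀ z ∈ ball c M, Complex.exp (f z) = p.eval z) (t : ℂ) {n : ℕ} (hn : n ≠ 0) :
    ‖iteratedDeriv n f c * (t - c) ^ n / (n ! : ℂ)‖ ≤ p.natDegree * (‖t - c‖ / M) ^ n / n := by
  obtain ⟨k, rfl⟩ := exists_eq_succ_of_ne_zero hn
  rw [norm_div, norm_mul, norm_pow, Complex.norm_natCast]
  calc ‖iteratedDeriv (k + 1) f c‖ * ‖t - c‖ ^ (k + 1) / (k + 1)!
      ≤ p.natDegree * k ! / M ^ (k + 1) * ‖t - c‖ ^ (k + 1) / (k + 1)! := by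
        gcongr
        exact norm_iteratedDeriv_succ_le_of_exp_eq_eval hM hf hlog k
    _ = p.natDegree * (‖t - c‖ / M) ^ (k + 1) / (k + 1 : ℕ) := by
        rw [factorial_succ, div_pow]
        push_cast
        field_simp

theorem HasSum.norm_sub_sum_range_le {E : Type*} [NormedAddCommGroup E] {a : ℕ → E} {s : E}
    (hs : HasSum a s) {C q : ℝ} (hC : 0 ≤ C) (hq₀ : 0 ≤ q) (hq₁ : q < 1) (m : ℕ)
    (ha : ∀ n, m < n → ‖a n‖ ≤ C * q ^ n / n) :
    ‖s - ∑ n ∈ range (m + 1), a n‖ ≤ C * q ^ (m + 1) / ((m + 1) * (1 - q)) := by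
  set B := C * q ^ (m + 1) / (m + 1)
  have hgeom : HasSum (fun i => B * q ^ i) (B * (1 - q)⁻¹) :=
    (hasSum_geometric_of_lt_one hq₀ hq₁).mul_left B
  calc ‖s - ∑ n ∈ range (m + 1), a n‖ ≤ B * (1 - q)⁻¹ :=
        ((hasSum_nat_add_iff' (m + 1)).2 hs).norm_le_of_bounded hgeom fun i => ?_
    _ = C * q ^ (m + 1) / ((m + 1) * (1 - q)) := by
        rw [div_mul_eq_div_div, div_eq_mul_inv _ (1 - q)]
  calc ‖a (i + (m + 1))‖ ≤ C * q ^ (i + (m + 1)) / (i + (m + 1) : ℕ) := ha _ (by omega)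
    _ ≤ C * q ^ (i + (m + 1)) / (m + 1) := by
        gcongr
        push_cast
        linarith [(i.cast_nonneg : (0 : ℝ) ≤ i)]
    _ = B * q ^ i := by ring

theorem log_taylor_truncation_bound_general
    (p : Polynomial ℂ) (d : ℕ) (hd : p.natDegree = d)
    (M : ℝ)
    (f : ℂ → ℂ) (hf : AnalyticOn ℂ f (Metric.ball (0 : ℂ) M))
    (hlog : ∀ z ∈ Metric.ball (0 : ℂ) M, Complex.exp (f z) = p.eval z)
    (t : ℂ) (ht : ‖t‖ < M) (q : ℝ) (hq : q = ‖t‖ / M)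
    (m : ℕ) :
    ‖f t - ∑ j ∈ Finset.range (m + 1),
        (iteratedDeriv j f 0) * t ^ j / (Nat.factorial j)‖ ≤
      d * q ^ (m + 1) / ((m + 1) * (1 - q)) := by
  have hM : 0 < M := (norm_nonneg t).trans_lt ht
  have hfd := hf.differentiableOn
  have htaylor : HasSum (fun j => iteratedDeriv j f 0 * t ^ j / j !) (f t) := by
    have h := Complex.hasSum_taylorSeries_on_ball hfd (mem_ball_zero_iff.2 ht)
    simp only [sub_zero, smul_eq_mul] at h
    have hterm : (fun j => (j ! : ℂ)⁻¹ * (t ^ j * iteratedDeriv j f 0)) =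
        fun j => iteratedDeriv j f 0 * t ^ j / j ! := by
      funext j; ring
    rwa [hterm] at h
  subst hd hq
  refine htaylor.norm_sub_sum_range_le (Nat.cast_nonneg _) (by positivity) ((div_lt_one hM).2 ht) m
    fun n hn => ?_
  simpa using norm_taylorTerm_le_of_exp_eq_eval hM hfd hlog t (by omega : n ≠ 0)

/-- Quality of the Taylor truncation of `f = log p`:
if `p` is a degree-`d` polynomial nonvanishing on the open disk of radius `M > 0`,
`f` is an analytic branch of `log p` on this disk, `|t| < M` and `q = |t|/M`, then
`|f(t) - T_m(f)(t)| ≤ d·q^{m+1} / ((m+1)(1-q))`, where `T_m(f)` is the degree-`m`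
Taylor polynomial of `f` at `0`. -/
theorem log_taylor_truncation_bound
    (p : Polynomial ℂ) (d : ℕ) (hd : p.natDegree = d)
    (M : ℝ) (hM : 0 < M)
    (hnz : ∀ z ∈ Metric.ball (0 : ℂ) M, p.eval z ≠ 0)
    (f : ℂ → ℂ) (hf : AnalyticOn ℂ f (Metric.ball (0 : ℂ) M))
    (hlog : ∀ z ∈ Metric.ball (0 : ℂ) M, Complex.exp (f z) = p.eval z)
    (t : ℂ) (ht : ‖t‖ < M) (q : ℝ) (hq : q = ‖t‖ / M)
    (m : ℕ) :
    ‖f t - ∑ j ∈ Finset.range (m + 1),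
        (iteratedDeriv j f 0) * t ^ j / (Nat.factorial j)‖ ≤
      d * q ^ (m + 1) / ((m + 1) * (1 - q)) :=
  log_taylor_truncation_bound_general p d hd M f hf hlog t ht q hq m
end

section
/- Let f be a graph invariant of the form f(G) = ∑_H a_H · ind(H, G) (a finite-support linear combination over isomorphism classes of finite graphs). Then f is additive (i.e. f(G₁ ⊔ G₂) = f(G₁) + f(G₂) for all G₁, G₂) if and only if a_H = 0 for every disconnected graph H. -/
/-!
A connected induced subgraph of `G₁ ⊔ G₂` lies entirely in one of the two sides, so
`ind(H, ·)` is additive for connected `H`; this gives one direction. Conversely, take a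
disconnected `H` and assume `a_{H'} = 0` for all disconnected `H'` of smaller order. Split
`H ≅ G₁ ⊔ G₂` into two smaller graphs. Graphs `H'` of order at least `|H|` do not occur in
`G₁` or `G₂`, and among them only `H` itself occurs in `H`, once; the terms of smaller order
are additive by the induction hypothesis. Additivity at `(G₁, G₂)` thus reads
`a_H + x = x`. The empty graph counts as disconnected; it is handled by `∅ ⊔ ∅ ≅ ∅`
instead.
-/

open Finset

/-- `indCount H G` is the number of vertex subsets `S` of `G` such that the induced
subgraph `G[S]` is isomorphic to `H`. -/
noncomputable def indCount {α β : Type} [Fintype α] [Fintype β]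
    (H : SimpleGraph α) (G : SimpleGraph β) : ℕ :=
  Nat.card {S : Finset β // Nonempty ((G.induce (S : Set β)) ≃g H)}

/-- The graph invariant `G ↦ ∑_H a_H · ind(H, G)`, where the (finitely many) graphs
`H` range over a finite set `s` of representatives and `a` gives the coefficients. -/
noncomputable def fval (s : Finset (Σ n : ℕ, SimpleGraph (Fin n)))
    (a : (Σ n : ℕ, SimpleGraph (Fin n)) → ℂ)
    {β : Type} [Fintype β] (G : SimpleGraph β) : ℂ :=
  ∑ H ∈ s, a H * indCount H.2 G

namespace SimpleGraph

variable {V W : Type*} {G : SimpleGraph V} {G' : SimpleGraph W}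

noncomputable def Embedding.induceMapIso (f : G ↪g G') (S : Finset V) :
    G.induce (S : Set V) ≃g G'.induce (S.map f.toEmbedding : Set W) where
  toEquiv := (Equiv.Set.image f S f.injective).trans (Equiv.setCongr (by simp))
  map_rel_iff' := f.map_adj_iff

lemma Embedding.nonempty_induce_map_iso_iff {U : Type*} {H : SimpleGraph U} (f : G ↪g G')
    (S : Finset V) :
    Nonempty (G'.induce (S.map f.toEmbedding : Set W) ≃g H) ↔
      Nonempty (G.induce (S : Set V) ≃g H) :=
  ⟨fun ⟨ψ⟩ => ⟨(f.induceMapIso S).trans ψ⟩, fun ⟨ψ⟩ => ⟨(f.induceMapIso S).symm.trans ψ⟩⟩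

lemma card_eq_of_induce_iso {U : Type*} [Fintype U] {H : SimpleGraph U} {S : Finset V}
    (ψ : G.induce (S : Set V) ≃g H) : S.card = Fintype.card U := by
  simpa using Fintype.card_congr ψ.toEquiv

lemma eq_univ_of_induce_iso [Fintype V] {U : Type*} [Fintype U] {H : SimpleGraph U}
    (hcard : Fintype.card V ≤ Fintype.card U) {S : Finset V} (ψ : G.induce (S : Set V) ≃g H) :
    S = univ := by
  have := card_le_univ S
  exact eq_univ_of_card S (by rw [card_eq_of_induce_iso ψ] at this ⊢; omega)

def sumInduceComplIso (s : Set V) [DecidablePred (· ∈ s)]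
    (hs : ∀ ⦃u v⦄, G.Adj u v → u ∈ s → v ∈ s) : G.induce s ⊕g G.induce sᶜ ≃g G where
  toEquiv := Equiv.Set.sumCompl s
  map_rel_iff' := by
    rintro (⟨u, hu⟩ | ⟨u, hu⟩) (⟨v, hv⟩ | ⟨v, hv⟩)
    · exact Iff.rfl
    · simpa using fun huv => hv (hs huv hu)
    · simpa using fun huv => hu (hs huv.symm hv)
    · exact Iff.rfl

lemma Connected.toLeft_eq_empty_or_toRight_eq_empty {S : Finset (V ⊕ W)}
    (h : ((G ⊕g G').induce (S : Set (V ⊕ W))).Connected) :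
    S.toLeft = ∅ ∨ S.toRight = ∅ := by
  by_contra! hne
  obtain ⟨⟨v, hv⟩, ⟨w, hw⟩⟩ := hne
  exact not_reachable_sum_inl_inr v w
    ((h.preconnected ⟨_, mem_toLeft.1 hv⟩ ⟨_, mem_toRight.1 hw⟩).map (Embedding.induce _).toHom)

lemma exists_iso_sum_of_not_connected [Fintype V] [Nonempty V] (h : ¬ G.Connected) :
    ∃ (m₁ m₂ : ℕ) (G₁ : SimpleGraph (Fin m₁)) (G₂ : SimpleGraph (Fin m₂)),
      m₁ < Fintype.card V ∧ m₂ < Fintype.card V ∧ Nonempty (G₁ ⊕g G₂ ≃g G) := by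
  classical
  obtain ⟨x, y, hxy⟩ : ∃ x y, ¬ G.Reachable x y := by
    simpa [connected_iff, Preconnected] using h
  let s : Set V := {v | G.Reachable x v}
  have hs : ∀ ⦃u v⦄, G.Adj u v → u ∈ s → v ∈ s := fun _ _ huv hu => hu.trans huv.reachable
  have hcard : Fintype.card s + Fintype.card ↥sᶜ = Fintype.card V := by
    rw [← Fintype.card_sum]; exact Fintype.card_congr (Equiv.Set.sumCompl s)
  have hx : 0 < Fintype.card s := Fintype.card_pos_iff.2 ⟨⟨x, Reachable.refl x⟩⟩
  have hy : 0 < Fintype.card ↥sᶜ := Fintype.card_pos_iff.2 ⟨⟨y, hxy⟩⟩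
  exact ⟨_, _, (G.induce s).overFin rfl, (G.induce sᶜ).overFin rfl, by omega, by omega,
    ⟨((overFinIso _ rfl).symm.sumCongr (overFinIso _ rfl).symm).trans (sumInduceComplIso s hs)⟩⟩

end SimpleGraph

open SimpleGraph

section IndCount

variable {α β γ : Type} [Fintype α] [Fintype β] [Fintype γ] {H : SimpleGraph α}
  {G : SimpleGraph β}

lemma indCount_eq_ncard :
    indCount H G = {S : Finset β | Nonempty (G.induce (S : Set β) ≃g H)}.ncard :=
  rfl

lemma indCount_eq_zero_of_card_le (hcard : Fintype.card β ≤ Fintype.card α)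
    (hGH : IsEmpty (G ≃g H)) : indCount H G = 0 := by
  rw [indCount_eq_ncard, Set.ncard_eq_zero]
  refine Set.eq_empty_of_forall_notMem fun S ⟨ψ⟩ => hGH.false ?_
  obtain rfl := eq_univ_of_induce_iso hcard ψ
  rw [coe_univ] at ψ
  exact G.induceUnivIso.symm.trans ψ

lemma indCount_eq_zero_of_card_lt (hcard : Fintype.card β < Fintype.card α) :
    indCount H G = 0 :=
  indCount_eq_zero_of_card_le hcard.le ⟨fun φ => hcard.ne (Fintype.card_congr φ.toEquiv)⟩

lemma indCount_self : indCount H H = 1 := by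
  rw [indCount_eq_ncard, Set.ncard_eq_one]
  refine ⟨univ, Set.eq_singleton_iff_unique_mem.2
    ⟨?_, fun S ⟨ψ⟩ => eq_univ_of_induce_iso le_rfl ψ⟩⟩
  rw [Set.mem_ofPred_eq, coe_univ]
  exact ⟨H.induceUnivIso⟩

lemma indCount_congr (H : SimpleGraph α) {G' : SimpleGraph γ} (φ : G ≃g G') :
    indCount H G = indCount H G' :=
  Nat.card_congr <| Equiv.subtypeEquiv φ.toEquiv.finsetCongr fun S =>
    (φ.toEmbedding.nonempty_induce_map_iso_iff S).symm

lemma indCount_sum (hH : H.Connected) (G₁ : SimpleGraph β) (G₂ : SimpleGraph γ) :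
    indCount H (G₁ ⊕g G₂) = indCount H G₁ + indCount H G₂ := by
  classical
  set A := {S : Finset β | Nonempty (G₁.induce (S : Set β) ≃g H)}
  set B := {S : Finset γ | Nonempty (G₂.induce (S : Set γ) ≃g H)}
  have hsplit : {S : Finset (β ⊕ γ) | Nonempty ((G₁ ⊕g G₂).induce (S : Set (β ⊕ γ)) ≃g H)} =
      (fun S => S.map .inl) '' A ∪ (fun S => S.map .inr) '' B := by
    ext S
    simp only [A, B, Set.mem_union, Set.mem_image, Set.mem_ofPred_eq]
    constructor
    · rintro ⟨ψ⟩
      rcases (ψ.connected_iff.2 hH).toLeft_eq_empty_or_toRight_eq_empty with h | h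
      · have hS : S.toRight.map .inr = S := by
          rw [← empty_disjSum, ← h, toLeft_disjSum_toRight]
        rw [← hS] at ψ
        exact .inr ⟨_, (Embedding.sumInr.nonempty_induce_map_iso_iff _).1 ⟨ψ⟩, hS⟩
      · have hS : S.toLeft.map .inl = S := by
          rw [← disjSum_empty, ← h, toLeft_disjSum_toRight]
        rw [← hS] at ψ
        exact .inl ⟨_, (Embedding.sumInl.nonempty_induce_map_iso_iff _).1 ⟨ψ⟩, hS⟩
    · rintro (⟨S, hS, rfl⟩ | ⟨S, hS, rfl⟩)
      · exact (Embedding.sumInl.nonempty_induce_map_iso_iff S).2 hS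
      · exact (Embedding.sumInr.nonempty_induce_map_iso_iff S).2 hS
  have hdisj : Disjoint ((fun S => S.map .inl) '' A) ((fun S => S.map .inr) '' B) := by
    refine Set.disjoint_left.2 ?_
    rintro _ ⟨S, ⟨ψ⟩, rfl⟩ ⟨T, -, hST : T.map _ = S.map _⟩
    obtain ⟨b, hb⟩ : S.Nonempty := by
      rw [← card_pos, card_eq_of_induce_iso ψ]
      exact Fintype.card_pos_iff.2 hH.nonempty
    have hb' := mem_map_of_mem (Function.Embedding.inl (β := γ)) hb
    rw [← hST] at hb'
    simp at hb'
  rw [indCount_eq_ncard, hsplit, Set.ncard_union_eq hdisj,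
    Set.ncard_image_of_injective _ (Finset.map_injective _),
    Set.ncard_image_of_injective _ (Finset.map_injective _)]
  rfl

end IndCount

section Fval

variable {s : Finset (Σ n : ℕ, SimpleGraph (Fin n))} {a : (Σ n : ℕ, SimpleGraph (Fin n)) → ℂ}
  {β γ : Type} [Fintype β] [Fintype γ]

lemma fval_congr {G : SimpleGraph β} {G' : SimpleGraph γ} (φ : G ≃g G') :
    fval s a G = fval s a G' :=
  sum_congr rfl fun H _ => by rw [indCount_congr H.2 φ]

lemma fval_sum_of_forall_not_connected_eq_zero (h : ∀ H ∈ s, ¬ H.2.Connected → a H = 0)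
    (G₁ : SimpleGraph β) (G₂ : SimpleGraph γ) :
    fval s a (G₁ ⊕g G₂) = fval s a G₁ + fval s a G₂ := by
  rw [fval, fval, fval, ← sum_add_distrib]
  refine sum_congr rfl fun H hH => ?_
  by_cases hc : H.2.Connected
  · rw [indCount_sum hc]
    push_cast
    ring
  · simp [h H hH hc]

lemma fval_filter_of_card_le (p : (Σ n : ℕ, SimpleGraph (Fin n)) → Prop) [DecidablePred p]
    {G : SimpleGraph β} (hp : ∀ H ∈ s, H.1 ≤ Fintype.card β → p H) :
    fval (s.filter p) a G = fval s a G := by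
  rw [fval, fval, sum_filter]
  refine sum_congr rfl fun H hH => ?_
  split_ifs with hpH
  · rfl
  · rw [indCount_eq_zero_of_card_lt (by simpa using mt (hp H hH) hpH), Nat.cast_zero, mul_zero]

lemma fval_eq_coeff_add_fval_filter_lt
    (hrep : ∀ H ∈ s, ∀ H' ∈ s, Nonempty (H.2 ≃g H'.2) → H = H') {H} (hH : H ∈ s) :
    fval s a H.2 = a H + fval (s.filter fun H' => H'.1 < H.1) a H.2 := by
  rw [fval, fval, ← sum_filter_add_sum_filter_not s (fun H' => H'.1 < H.1), add_comm]
  congr 1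
  rw [sum_eq_single_of_mem H (mem_filter.2 ⟨hH, lt_irrefl _⟩), indCount_self, Nat.cast_one,
    mul_one]
  intro H' hH' hne
  obtain ⟨hH's, hle⟩ := mem_filter.1 hH'
  rw [indCount_eq_zero_of_card_le (by simpa using hle)
    ⟨fun ψ => hne (hrep H hH H' hH's ⟨ψ⟩).symm⟩, Nat.cast_zero, mul_zero]

end Fval

lemma coeff_eq_zero_of_fval_additive {s : Finset (Σ n : ℕ, SimpleGraph (Fin n))}
    {a : (Σ n : ℕ, SimpleGraph (Fin n)) → ℂ}
    (hrep : ∀ H ∈ s, ∀ H' ∈ s, Nonempty (H.2 ≃g H'.2) → H = H')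
    (hadd : ∀ (m₁ m₂ : ℕ) (G₁ : SimpleGraph (Fin m₁)) (G₂ : SimpleGraph (Fin m₂)),
      fval s a (G₁ ⊕g G₂) = fval s a G₁ + fval s a G₂)
    {H : Σ n : ℕ, SimpleGraph (Fin n)} (hH : H ∈ s) (hcon : ¬ H.2.Connected)
    (ih : ∀ H' ∈ s, H'.1 < H.1 → ¬ H'.2.Connected → a H' = 0) : a H = 0 := by
  have hself := fval_eq_coeff_add_fval_filter_lt (a := a) hrep hH
  have hadd_lt {β γ : Type} [Fintype β] [Fintype γ] (G₁ : SimpleGraph β) (G₂ : SimpleGraph γ) :=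
    fval_sum_of_forall_not_connected_eq_zero (s := s.filter fun H' => H'.1 < H.1) (a := a)
      (fun H' hH' => ih H' (mem_filter.1 hH').1 (mem_filter.1 hH').2) G₁ G₂
  rcases isEmpty_or_nonempty (Fin H.1) with _ | _
  · let φ : H.2 ⊕g H.2 ≃g H.2 := ⟨Equiv.equivOfIsEmpty _ _, fun {v} => isEmptyElim v⟩
    have h := hadd _ _ H.2 H.2
    have h_lt := hadd_lt H.2 H.2
    rw [fval_congr φ] at h h_lt
    linear_combination -hself - h + h_lt
  · obtain ⟨m₁, m₂, G₁, G₂, h₁, h₂, ⟨φ⟩⟩ := exists_iso_sum_of_not_connected hcon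
    rw [Fintype.card_fin] at h₁ h₂
    have h := hadd m₁ m₂ G₁ G₂
    rw [fval_congr φ, hself,
      ← fval_filter_of_card_le (G := G₁) (fun H' => H'.1 < H.1)
        fun _ _ hle => (hle.trans_eq (Fintype.card_fin _)).trans_lt h₁,
      ← fval_filter_of_card_le (G := G₂) (fun H' => H'.1 < H.1)
        fun _ _ hle => (hle.trans_eq (Fintype.card_fin _)).trans_lt h₂,
      ← hadd_lt, fval_congr φ] at h
    simpa using h

/-- A finite-support linear combination `f = ∑_H a_H · ind(H, ·)` over pairwise
non-isomorphic graphs `H` is additive (i.e. `f(G₁ ⊔ G₂) = f(G₁) + f(G₂)` for all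
finite graphs `G₁, G₂`) if and only if `a_H = 0` for every `H` that is not
connected. -/
theorem fval_additive_iff_support_connected
    (s : Finset (Σ n : ℕ, SimpleGraph (Fin n)))
    (a : (Σ n : ℕ, SimpleGraph (Fin n)) → ℂ)
    (hrep : ∀ H ∈ s, ∀ H' ∈ s, Nonempty (H.2 ≃g H'.2) → H = H') :
    (∀ (m₁ m₂ : ℕ) (G₁ : SimpleGraph (Fin m₁)) (G₂ : SimpleGraph (Fin m₂)),
        fval s a (G₁ ⊕g G₂) = fval s a G₁ + fval s a G₂) ↔
      (∀ H ∈ s, ¬ H.2.Connected → a H = 0) := by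
  refine ⟨fun hadd H hH hcon => ?_, fun h _ _ => fval_sum_of_forall_not_connected_eq_zero h⟩
  induction hn : H.1 using Nat.strong_induction_on generalizing H with
  | _ n ih =>
    exact coeff_eq_zero_of_fval_additive hrep hadd hH hcon
      fun H' hH' hlt hcon' => ih _ (hn ▸ hlt) H' hH' hcon' rfl
end

section
/- Let G be a graph of maximum degree at most Δ ≥ 2 and let λ ∈ ℂ satisfy |λ| ≤ (Δ-1)^{Δ-1}/Δ^Δ. Then the independence polynomial Z(G)(λ) = ∑_{I independent} λ^{|I|} is nonzero. -/
/-!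
Write `Z_A` for the independence polynomial of the subgraph induced on `A` and `d = Δ - 1`.
Deleting a vertex `v` gives `Z_A = Z_{A-v} + λ Z_{A-v-N(v)}`. By strong induction on `A`,
`Z_A ≠ 0` and `|Z_A| > d/(d+1) |Z_{A-v}|` whenever `v` has at most `d` neighbours in `A`.
For the inductive step, remove the `k ≤ d + 1` neighbours of `v` from `A - v` one at a time: each
of them has lost its neighbour `v`, so the ratio bound applies and telescopes to
`d^k |Z_{A-v-N(v)}| < (d+1)^k |Z_{A-v}|` for `k ≥ 1`. With `|λ| ≤ d^d/(d+1)^(d+1)` this makes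
`|λ Z_{A-v-N(v)}|` less than `|Z_{A-v}|/(d+1)` when `k ≤ d`, which propagates the ratio bound,
and less than `|Z_{A-v}|` when `k = d + 1`, which still gives `Z_A ≠ 0`.
-/

open Finset
open scoped Classical

/-- The independence polynomial of `G` evaluated at `x`:
`Z(G)(x) = ∑_{I independent} x^{|I|}` (the empty set included). -/
noncomputable def indepPoly {V : Type} [Fintype V] (G : SimpleGraph V) (x : ℂ) : ℂ :=
  ∑ S : Finset V, if (∀ u ∈ S, ∀ v ∈ S, ¬ G.Adj u v) then x ^ S.card else 0

theorem pow_card_mul_lt_of_insert {α : Type*} [DecidableEq α] {F : Finset α → ℝ} {a b : ℝ}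
    {s : Finset α} (ha : 0 < a) (hb : 0 ≤ b)
    (h : ∀ t ⊆ s, ∀ u ∈ s, u ∉ t → a * F (insert u t) < b * F t)
    {t : Finset α} (hts : t ⊆ s) (ht : t.Nonempty) :
    a ^ #t * F t < b ^ #t * F ∅ := by
  induction ht using Finset.Nonempty.cons_induction with
  | singleton u =>
    simpa using h ∅ (empty_subset s) u (hts (mem_singleton_self u)) (notMem_empty u)
  | cons u t hut ht ih =>
    have hts' : t ⊆ s := (subset_cons hut).trans hts
    rw [cons_eq_insert, card_insert_of_notMem hut]
    calc a ^ (#t + 1) * F (insert u t) = a ^ #t * (a * F (insert u t)) := by ring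
      _ < a ^ #t * (b * F t) :=
          mul_lt_mul_of_pos_left (h t hts' u (hts (mem_cons_self u t)) hut) (by positivity)
      _ = b * (a ^ #t * F t) := by ring
      _ ≤ b * (b ^ #t * F ∅) := mul_le_mul_of_nonneg_left (ih hts').le hb
      _ = b ^ (#t + 1) * F ∅ := by ring

theorem pow_mul_lt_pow_mul_of_le {a b y z : ℝ} {m n : ℕ} (ha : 0 < a) (hab : a ≤ b)
    (hz : 0 ≤ z) (hmn : m ≤ n) (h : a ^ m * y < b ^ m * z) : a ^ n * y < b ^ n * z := by
  obtain ⟨k, rfl⟩ := Nat.exists_eq_add_of_le hmn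
  calc a ^ (m + k) * y = a ^ k * (a ^ m * y) := by ring
    _ < a ^ k * (b ^ m * z) := by gcongr
    _ ≤ b ^ k * (b ^ m * z) := mul_le_mul_of_nonneg_right (pow_le_pow_left₀ ha.le hab k)
        (mul_nonneg (pow_nonneg (ha.le.trans hab) m) hz)
    _ = b ^ (m + k) * z := by ring

theorem succ_mul_mul_lt_of_pow_mul_lt {d : ℕ} {c y z : ℝ}
    (hc : c ≤ (d : ℝ) ^ d / (d + 1) ^ (d + 1)) (hy : 0 ≤ y)
    (h : (d : ℝ) ^ d * y < (d + 1) ^ d * z) : (d + 1) * c * y < z := by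
  have hpos : (0 : ℝ) < (d + 1) ^ d := by positivity
  calc (d + 1) * c * y ≤ (d + 1) * ((d : ℝ) ^ d / (d + 1) ^ (d + 1)) * y := by gcongr
    _ = (d : ℝ) ^ d * y / (d + 1) ^ d := by field_simp; ring
    _ < z := by rw [div_lt_iff₀ hpos]; linarith

theorem mul_lt_of_pow_succ_mul_lt {d : ℕ} {c y z : ℝ} (hd : 0 < d) (hc0 : 0 ≤ c)
    (hc : c ≤ (d : ℝ) ^ d / (d + 1) ^ (d + 1)) (hy : 0 ≤ y)
    (h : (d : ℝ) ^ (d + 1) * y < (d + 1) ^ (d + 1) * z) : c * y < z := by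
  have hpos : (0 : ℝ) < (d + 1) ^ (d + 1) := by positivity
  have hd1 : (1 : ℝ) ≤ d := by exact_mod_cast hd
  calc c * y ≤ d * (c * y) := le_mul_of_one_le_left (by positivity) hd1
    _ ≤ d * ((d : ℝ) ^ d / (d + 1) ^ (d + 1) * y) := by gcongr
    _ = (d : ℝ) ^ (d + 1) * y / (d + 1) ^ (d + 1) := by ring
    _ < z := by rw [div_lt_iff₀ hpos]; linarith

namespace SimpleGraph

variable {V : Type} (G : SimpleGraph V)

noncomputable def indepPolyOn (x : ℂ) (A : Finset V) : ℂ :=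
  ∑ S ∈ A.powerset, if G.IsIndepSet (S : Set V) then x ^ #S else 0

@[simp]
theorem indepPolyOn_empty (x : ℂ) : G.indepPolyOn x ∅ = 1 := by
  simp [indepPolyOn]

theorem indepPoly_eq_indepPolyOn_univ [Fintype V] (x : ℂ) :
    indepPoly G x = G.indepPolyOn x univ := by
  rw [indepPoly, indepPolyOn, powerset_univ]
  refine sum_congr rfl fun S _ => if_congr ?_ rfl rfl
  exact ⟨fun h u hu w hw _ => h u hu w hw, fun h u hu w hw huw => h hu hw (G.ne_of_adj huw) huw⟩

theorem isIndepSet_insert {v : V} {S : Set V} :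
    G.IsIndepSet (insert v S) ↔ G.IsIndepSet S ∧ ∀ u ∈ S, ¬ G.Adj v u := by
  rw [IsIndepSet, Set.pairwise_insert]
  refine and_congr_right fun _ => forall₂_congr fun u _ => ?_
  rw [G.adj_comm u v, and_self]
  exact ⟨fun h huv => h (G.ne_of_adj huv) huv, fun h _ => h⟩

theorem indepPolyOn_eq_add {A : Finset V} {v : V} (hv : v ∈ A) (x : ℂ) :
    G.indepPolyOn x A =
      G.indepPolyOn x (A.erase v) + x * G.indepPolyOn x (A.erase v \ A.filter (G.Adj v)) := by
  have hvA : v ∉ A.erase v := notMem_erase v A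
  conv_lhs => rw [indepPolyOn, ← insert_erase hv, sum_powerset_insert hvA]
  rw [indepPolyOn, indepPolyOn, mul_sum]
  congr 1
  refine (sum_subset (powerset_mono.mpr sdiff_subset) fun S hS hSs => ?_).symm.trans
    (sum_congr rfl fun S hS => ?_)
  · obtain ⟨u, huS, hu⟩ := not_subset.mp (mt mem_powerset.mpr hSs)
    have huA := mem_powerset.mp hS huS
    have hvu : G.Adj v u := by
      by_contra h
      exact hu (mem_sdiff.mpr ⟨huA, fun h' => h (mem_filter.mp h').2⟩)
    rw [if_neg]
    push_cast
    rw [isIndepSet_insert]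
    exact fun h => h.2 u huS hvu
  · have hS' := mem_powerset.mp hS
    have hvS : v ∉ S := fun h => hvA (sdiff_subset (hS' h))
    have hnadj : ∀ u ∈ (S : Set V), ¬ G.Adj v u := fun u hu huv =>
      (mem_sdiff.mp (hS' hu)).2
        (mem_filter.mpr ⟨mem_of_mem_erase (mem_sdiff.mp (hS' hu)).1, huv⟩)
    push_cast
    rw [card_insert_of_notMem hvS, pow_succ', mul_ite, mul_zero]
    exact if_congr ((G.isIndepSet_insert).trans (and_iff_left hnadj)) rfl rfl

theorem norm_indepPolyOn_erase_le {A : Finset V} {v : V} (hv : v ∈ A) (x : ℂ) :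
    ‖G.indepPolyOn x (A.erase v)‖ ≤
      ‖G.indepPolyOn x A‖ +
        ‖x‖ * ‖G.indepPolyOn x (A.erase v \ A.filter (G.Adj v))‖ := by
  rw [← norm_mul]
  calc ‖G.indepPolyOn x (A.erase v)‖
      = ‖G.indepPolyOn x A - x * G.indepPolyOn x (A.erase v \ A.filter (G.Adj v))‖ := by
        rw [G.indepPolyOn_eq_add hv x, add_sub_cancel_right]
    _ ≤ _ := norm_sub_le _ _

theorem card_filter_adj_le_degree (A : Finset V) (v : V) [Fintype (G.neighborSet v)] :
    #(A.filter (G.Adj v)) ≤ G.degree v := by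
  rw [← card_neighborFinset_eq_degree]
  exact card_le_card fun u hu => (G.mem_neighborFinset v u).mpr (mem_filter.mp hu).2

theorem card_filter_adj_lt_degree {A : Finset V} {u v : V} [Fintype (G.neighborSet u)]
    (hv : v ∉ A) (huv : G.Adj u v) :
    #(A.filter (G.Adj u)) < G.degree u := by
  rw [← card_neighborFinset_eq_degree]
  refine card_lt_card ⟨fun w hw => (G.mem_neighborFinset u w).mpr (mem_filter.mp hw).2,
    fun h => hv (mem_filter.mp (h ((G.mem_neighborFinset u v).mpr huv))).1⟩

def ShearerInvariant (d : ℕ) (x : ℂ) (A : Finset V) : Prop :=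
  G.indepPolyOn x A ≠ 0 ∧ ∀ v ∈ A, #(A.filter (G.Adj v)) ≤ d →
    d * ‖G.indepPolyOn x (A.erase v)‖ < (d + 1) * ‖G.indepPolyOn x A‖

section Shearer

variable [G.LocallyFinite] {d : ℕ} {x : ℂ}

theorem pow_mul_norm_indepPolyOn_lt (hd : 0 < d) (hdeg : ∀ v, G.degree v ≤ d + 1)
    {A : Finset V} {v : V} (hv : v ∈ A)
    (ih : ∀ C ⊂ A, G.ShearerInvariant d x C) {n : ℕ} (hn : 1 ≤ n)
    (hsn : #(A.filter (G.Adj v)) ≤ n) :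
    (d : ℝ) ^ n * ‖G.indepPolyOn x (A.erase v \ A.filter (G.Adj v))‖ <
      (d + 1) ^ n * ‖G.indepPolyOn x (A.erase v)‖ := by
  have hB : G.indepPolyOn x (A.erase v) ≠ 0 := (ih _ (erase_ssubset hv)).1
  have hd' : (0 : ℝ) < d := by exact_mod_cast hd
  rcases (A.filter (G.Adj v)).eq_empty_or_nonempty with hs | hs
  · rw [hs, sdiff_empty]
    exact mul_lt_mul_of_pos_right (pow_lt_pow_left₀ (lt_add_one _) hd'.le (by omega))
      (norm_pos_iff.mpr hB)
  have hstep : ∀ t ⊆ A.filter (G.Adj v), ∀ u ∈ A.filter (G.Adj v), u ∉ t →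
      d * ‖G.indepPolyOn x (A.erase v \ insert u t)‖ <
        (d + 1) * ‖G.indepPolyOn x (A.erase v \ t)‖ := by
    intro t _ u hu hut
    obtain ⟨huA, hvu⟩ := mem_filter.mp hu
    have hvt : v ∉ A.erase v \ t := fun h => notMem_erase v A (mem_sdiff.mp h).1
    rw [sdiff_insert]
    refine (ih _ (sdiff_subset.trans_ssubset (erase_ssubset hv))).2 u
      (mem_sdiff.mpr ⟨mem_erase.mpr ⟨(G.ne_of_adj hvu).symm, huA⟩, hut⟩) ?_
    have := G.card_filter_adj_lt_degree hvt hvu.symm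
    have := hdeg u
    omega
  refine pow_mul_lt_pow_mul_of_le hd' (by linarith) (norm_nonneg _) hsn ?_
  simpa using pow_card_mul_lt_of_insert (F := fun t => ‖G.indepPolyOn x (A.erase v \ t)‖)
    hd' (by positivity) hstep subset_rfl hs

theorem shearerInvariant_of_ssubset (hd : 0 < d) (hdeg : ∀ v, G.degree v ≤ d + 1)
    (hx : ‖x‖ ≤ (d : ℝ) ^ d / (d + 1) ^ (d + 1)) {A : Finset V}
    (ih : ∀ C ⊂ A, G.ShearerInvariant d x C) :
    G.ShearerInvariant d x A := by
  have hsmall : ∀ v ∈ A,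
      ‖x‖ * ‖G.indepPolyOn x (A.erase v \ A.filter (G.Adj v))‖ <
        ‖G.indepPolyOn x (A.erase v)‖ :=
    fun v hv => mul_lt_of_pow_succ_mul_lt hd (norm_nonneg x) hx (norm_nonneg _)
      (G.pow_mul_norm_indepPolyOn_lt hd hdeg hv ih (by omega)
        ((G.card_filter_adj_le_degree A v).trans (hdeg v)))
  refine ⟨?_, fun v hv hsd => ?_⟩
  · rcases A.eq_empty_or_nonempty with rfl | ⟨v, hv⟩
    · simp
    · exact norm_pos_iff.mp (by linarith [G.norm_indepPolyOn_erase_le hv x, hsmall v hv])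
  · have := succ_mul_mul_lt_of_pow_mul_lt hx (norm_nonneg _)
      (G.pow_mul_norm_indepPolyOn_lt hd hdeg hv ih hd hsd)
    nlinarith [G.norm_indepPolyOn_erase_le hv x]

theorem indepPolyOn_ne_zero (hd : 0 < d) (hdeg : ∀ v, G.degree v ≤ d + 1)
    (hx : ‖x‖ ≤ (d : ℝ) ^ d / (d + 1) ^ (d + 1)) (A : Finset V) : G.indepPolyOn x A ≠ 0 :=
  (A.strongInduction fun _ ih => G.shearerInvariant_of_ssubset hd hdeg hx ih).1

end Shearer

end SimpleGraph

/-- Shearer / Scott–Sokal: if `G` has maximum degree at most `Δ ≥ 2` and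
`|λ| ≤ (Δ-1)^{Δ-1}/Δ^Δ`, then the independence polynomial `Z(G)(λ)` is nonzero. -/
theorem indepPoly_ne_zero_of_small
    {V : Type} [Fintype V] (G : SimpleGraph V) [DecidableRel G.Adj]
    (Δ : ℕ) (hΔ : 2 ≤ Δ) (hdeg : ∀ v : V, G.degree v ≤ Δ)
    (lam : ℂ)
    (hlam : ‖lam‖ ≤ ((Δ : ℝ) - 1) ^ (Δ - 1) / (Δ : ℝ) ^ Δ) :
    indepPoly G lam ≠ 0 := by
  obtain ⟨d, rfl⟩ : ∃ d, Δ = d + 1 := ⟨Δ - 1, by omega⟩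
  rw [G.indepPoly_eq_indepPolyOn_univ]
  exact G.indepPolyOn_ne_zero (by omega) hdeg (by simpa using hlam) univ
end
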